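/- arXiv:2207.10224 — 3 statements merged into one kernel-verified Lean document; each statement's English description precedes it below -/
import Mathlib

section
/- For all integers n ≥ 0 and 0 ≤ k ≤ n, the Eulerian number satisfies A(n,k) = Σ_{j=0}^{k} (-1)^{k-j} · C(n+1, k−j) · (j+1)^n. -/
open Finset

/-- Stirling subset numbers (Stirling numbers of the second kind). -/
def stirling2 : ℕ → ℕ → ℕ
  | 0, 0 => 1
  | 0, _+1 => 0
  | _+1, 0 => 0
  | n+1, k+1 => (k+1) * stirling2 n (k+1) + stirling2 n k

/-- Eulerian numbers: permutations of an n-set with k descents. -/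
def eulerian : ℕ → ℕ → ℕ
  | 0, 0 => 1
  | 0, _+1 => 0
  | n+1, 0 => eulerian n 0
  | n+1, k+1 => (k+2) * eulerian n (k+1) + (n-k) * eulerian n k

/-- Reindexed explicit sum. -/
def eulG (n k : ℕ) : ℚ :=
  ∑ i ∈ range (k+1), (-1:ℚ)^i * ((n+1).choose i : ℚ) * ((k:ℚ) - i + 1)^n

lemma keyQ (n j : ℕ) :
    ((n:ℚ)+1-j) * ((n+1).choose j : ℚ) = ((n:ℚ)+1) * (n.choose j : ℚ) := by
  rcases le_or_gt j (n+1) with h | h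
  · have h1 : (n.choose j * (n + 1) : ℕ) = ((n + 1).choose j * (n + 1 - j) : ℕ) :=
      Nat.choose_mul_succ_eq n j
    have h2 : ((n + 1 - j : ℕ) : ℚ) = (n:ℚ) + 1 - j := by
      push_cast [Nat.cast_sub h]; ring
    have := congrArg (fun m : ℕ => (m : ℚ)) h1
    push_cast at this
    rw [h2] at this
    linarith
  · have h2 : n.choose j = 0 := Nat.choose_eq_zero_of_lt (by omega)
    have h3 : (n+1).choose j = 0 := Nat.choose_eq_zero_of_lt (by omega)
    simp [h2, h3]

lemma key2Q (n i : ℕ) :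
    ((i:ℚ)+1) * ((n+1).choose (i+1) : ℚ) = ((n:ℚ)+1) * (n.choose i : ℚ) := by
  have := Nat.add_one_mul_choose_eq n i
  have := congrArg (fun m : ℕ => (m : ℚ)) this
  push_cast at this
  linarith

lemma eulG_rec (n k : ℕ) :
    eulG (n+1) (k+1) = ((k:ℚ)+2) * eulG n (k+1) + ((n:ℚ)-(k:ℚ)) * eulG n k := by
  unfold eulG
  rw [Finset.sum_range_succ' (fun i => (-1:ℚ)^i * (((n+1)+1).choose i : ℚ) * (((k+1:ℕ):ℚ) - i + 1)^(n+1)) (k+1)]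
  rw [Finset.sum_range_succ' (fun i => (-1:ℚ)^i * ((n+1).choose i : ℚ) * (((k+1:ℕ):ℚ) - i + 1)^n) (k+1)]
  have hsum : ∑ i ∈ range (k+1), (-1:ℚ)^(i+1) * (((n+1)+1).choose (i+1) : ℚ) * (((k+1:ℕ):ℚ) - ((i+1:ℕ):ℚ) + 1)^(n+1)
      = ∑ i ∈ range (k+1), (((k:ℚ)+2) * ((-1:ℚ)^(i+1) * ((n+1).choose (i+1) : ℚ) * (((k+1:ℕ):ℚ) - ((i+1:ℕ):ℚ) + 1)^n)
          + ((n:ℚ)-(k:ℚ)) * ((-1:ℚ)^i * ((n+1).choose i : ℚ) * ((k:ℚ) - i + 1)^n)) := by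
    apply Finset.sum_congr rfl
    intro i _
    have hp : (((n+2).choose (i+1) : ℕ) : ℚ) = ((n+1).choose (i+1) : ℚ) + ((n+1).choose i : ℚ) := by
      rw [Nat.choose_succ_succ (n+1) i]; push_cast; ring
    have h1 := keyQ n i
    have h2 := key2Q n i
    push_cast
    push_cast at hp
    linear_combination ((-1:ℚ)^(i+1) * ((k:ℚ) - i + 1)^n) * (((k:ℚ) - i + 1) * hp + h1 - h2)
  rw [hsum, Finset.sum_add_distrib, ← Finset.mul_sum, ← Finset.mul_sum]
  simp only [Nat.choose_zero_right, Nat.cast_one, Nat.cast_zero, pow_zero]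
  push_cast
  ring

lemma eulG_zero_left (n : ℕ) : eulG n 0 = 1 := by
  simp [eulG]

lemma eulG_base (k : ℕ) : eulG 0 (k+1) = 0 := by
  unfold eulG
  rw [Finset.sum_range_succ' _ (k+1), Finset.sum_range_succ' _ k]
  have : ∀ i ∈ range k, (-1:ℚ)^(i+1+1) * ((0+1).choose (i+1+1) : ℚ) * (((k+1:ℕ):ℚ) - ((i+1+1:ℕ):ℚ) + 1)^0 = 0 := by
    intro i _
    have : (1).choose (i+2) = 0 := Nat.choose_eq_zero_of_lt (by omega)
    simp [this]
  rw [Finset.sum_congr rfl this]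
  simp

lemma eulG_of_lt : ∀ n k : ℕ, n < k → eulG n k = 0 := by
  intro n
  induction n with
  | zero =>
    intro k hk
    obtain ⟨k', rfl⟩ : ∃ k', k = k' + 1 := ⟨k - 1, by omega⟩
    exact eulG_base k'
  | succ n ih =>
    intro k hk
    obtain ⟨k', rfl⟩ : ∃ k', k = k' + 1 := ⟨k - 1, by omega⟩
    rw [eulG_rec]
    rw [ih (k'+1) (by omega), ih k' (by omega)]
    ring

lemma eulerian_of_lt : ∀ n k : ℕ, n < k → eulerian n k = 0 := by
  intro n
  induction n with
  | zero =>
    intro k hk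
    obtain ⟨k', rfl⟩ : ∃ k', k = k' + 1 := ⟨k - 1, by omega⟩
    rfl
  | succ n ih =>
    intro k hk
    obtain ⟨k', rfl⟩ : ∃ k', k = k' + 1 := ⟨k - 1, by omega⟩
    show (k'+2) * eulerian n (k'+1) + (n-k') * eulerian n k' = 0
    rw [ih (k'+1) (by omega), ih k' (by omega)]
    ring

lemma eulerian_eq_eulG : ∀ n k : ℕ, (eulerian n k : ℚ) = eulG n k := by
  intro n
  induction n with
  | zero =>
    intro k
    match k with
    | 0 => simp [eulerian, eulG]
    | k+1 => rw [eulG_base]; rfl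
  | succ n ih =>
    intro k
    match k with
    | 0 =>
      rw [eulG_zero_left]
      show ((eulerian n 0 : ℕ) : ℚ) = 1
      rw [ih 0, eulG_zero_left]
    | k+1 =>
      show (((k+2) * eulerian n (k+1) + (n-k) * eulerian n k : ℕ) : ℚ) = _
      rw [eulG_rec]
      push_cast
      rw [ih (k+1), ih k]
      rcases le_or_gt k n with h | h
      · rw [Nat.cast_sub h]
      · rw [eulG_of_lt n k h, Nat.sub_eq_zero_of_le (le_of_lt h)]
        push_cast
        ring

theorem eulerian_explicit (n k : ℕ) (hkn : k ≤ n) :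
    (eulerian n k : ℚ) =
      ∑ j ∈ Finset.range (k+1),
        (-1 : ℚ)^(k-j) * (Nat.choose (n+1) (k-j) : ℚ) * ((j : ℚ) + 1)^n := by
  rw [eulerian_eq_eulG, eulG]
  rw [← Finset.sum_range_reflect (fun i => (-1:ℚ)^i * ((n+1).choose i : ℚ) * ((k:ℚ) - i + 1)^n) (k+1)]
  apply Finset.sum_congr rfl
  intro j hj
  have hjk : j ≤ k := by simpa [Nat.lt_succ_iff] using hj
  have : (k + 1 - 1 - j : ℕ) = k - j := by omega
  rw [this]
  have hc : ((k - j : ℕ) : ℚ) = (k:ℚ) - j := by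
    push_cast [Nat.cast_sub hjk]; ring
  rw [hc]
  ring
end

section
/- For all rationals λ, a, b, r and all 0 ≤ k ≤ n, the generalized Stirling numbers satisfy the homogeneity property S(n,k)(λa, λb; λr) = λ^{n−k} · S(n,k)(a,b;r). -/
/-- Generalized Stirling numbers of Hsu and Shiue, S(n,k)(a,b;r). -/
def gS (a b r : ℚ) : ℕ → ℕ → ℚ
  | 0, 0 => 1
  | 0, _+1 => 0
  | n+1, 0 => (-a * n + r) * gS a b r n 0
  | n+1, k+1 => (-a * n + b * (k+1) + r) * gS a b r n (k+1) + gS a b r n k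

lemma gS_eq_zero (a b r : ℚ) : ∀ n k : ℕ, n < k → gS a b r n k = 0 := by
  intro n
  induction n with
  | zero =>
    intro k hk
    match k, hk with
    | k+1, _ => simp [gS]
  | succ n ih =>
    intro k hk
    match k, hk with
    | k+1, hk =>
      have h1 : n < k + 1 := Nat.lt_of_succ_lt_succ hk |>.trans (Nat.lt_succ_self k)
      have h2 : n < k := Nat.lt_of_succ_lt_succ hk
      simp [gS, ih _ h1, ih _ h2]

lemma gS_homog (lam a b r : ℚ) : ∀ n k : ℕ,
    gS (lam * a) (lam * b) (lam * r) n k = lam^(n-k) * gS a b r n k := by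
  intro n
  induction n with
  | zero =>
    intro k
    match k with
    | 0 => simp [gS]
    | k+1 => simp [gS]
  | succ n ih =>
    intro k
    match k with
    | 0 =>
      simp only [gS, ih 0, Nat.sub_zero, pow_succ]
      push_cast
      ring
    | k+1 =>
      rcases le_or_gt (k+1) n with h | h
      · have hpow : lam * lam ^ (n - (k+1)) = lam ^ (n - k) := by
          rw [← pow_succ']
          congr 1
          omega
        have hsub : n + 1 - (k + 1) = n - k := by omega
        simp only [gS, ih (k+1), ih k, hsub]
        rw [← hpow]
        ring
      · rcases le_or_gt (k+1) (n+1) with h' | h'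
        · -- k = n
          have h1 : n - k = 0 := by omega
          have h2 : n + 1 - (k + 1) = 0 := by omega
          simp only [gS, ih (k+1), ih k, gS_eq_zero a b r n (k+1) h, h1, h2,
            pow_zero, one_mul, mul_zero, add_zero, zero_add]
        · rw [gS_eq_zero _ _ _ _ _ h', gS_eq_zero a b r _ _ h', mul_zero]

theorem gS_homogeneity (lam a b r : ℚ) (n k : ℕ) (hkn : k ≤ n) :
    gS (lam * a) (lam * b) (lam * r) n k = lam^(n-k) * gS a b r n k := by
  exact gS_homog lam a b r n k
end

section
/- For all 0 ≤ k ≤ n and all rationals r: S(n,k)(−1,1;r) = C(n,k) · (n+r−1)(n+r−2)···(n+r−(n−k)), i.e., C(n,k) times the falling factorial of n+r−1 of length n−k. In particular S(n,k)(−1,1;0) are the unsigned Lah numbers. -/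
lemma gS_zero_of_lt (a b r : ℚ) : ∀ n k, n < k → gS a b r n k = 0 := by
  intro n
  induction n with
  | zero =>
    intro k hk
    match k, hk with
    | k+1, _ => rfl
  | succ n ih =>
    intro k hk
    match k, hk with
    | k+1, hk =>
      have h1 : n < k + 1 := by omega
      have h2 : n < k := by omega
      show (_ : ℚ) * gS a b r n (k+1) + gS a b r n k = 0
      rw [ih _ h1, ih _ h2]; ring

theorem gS_r_lah (r : ℚ) (n k : ℕ) (hkn : k ≤ n) :
    gS (-1) 1 r n k =
      (Nat.choose n k : ℚ) * ∏ i ∈ Finset.range (n-k), ((n : ℚ) + r - 1 - (i : ℚ)) := by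
  induction n generalizing k with
  | zero =>
    interval_cases k
    simp [gS]
  | succ n ih =>
    cases k with
    | zero =>
      have h0 : gS (-1) 1 r (n+1) 0 = ((n:ℚ) + r) * gS (-1) 1 r n 0 := by
        show (-(-1) * (n:ℚ) + r) * _ = _
        ring_nf
      rw [h0, ih 0 (Nat.zero_le n)]
      rw [show n+1-0 = n+1 from rfl, Nat.sub_zero, Finset.prod_range_succ']
      have hc : ∀ i ∈ Finset.range n,
          ((n:ℚ)+1+r-1-((i:ℚ)+1)) = (n:ℚ)+r-1-(i:ℚ) := by
        intro i _; ring
      push_cast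
      rw [Finset.prod_congr rfl hc]
      set P := ∏ i ∈ Finset.range n, ((n:ℚ)+r-1-(i:ℚ)) with hP
      simp only [Nat.choose_zero_right, Nat.cast_one]
      ring
    | succ k =>
      have hk : k ≤ n := Nat.lt_succ_iff.mp hkn
      have hrec : gS (-1) 1 r (n+1) (k+1)
          = ((n:ℚ) + ((k:ℚ)+1) + r) * gS (-1) 1 r n (k+1) + gS (-1) 1 r n k := by
        show (-(-1)*(n:ℚ) + 1*((k:ℚ)+1) + r) * _ + _ = _
        ring_nf
      rcases Nat.eq_or_lt_of_le hk with heq | hlt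
      · subst heq
        rw [hrec, gS_zero_of_lt _ _ _ _ _ (Nat.lt_succ_self k), ih k le_rfl]
        simp
      · have hk1 : k+1 ≤ n := hlt
        rw [hrec, ih (k+1) hk1, ih k hk]
        have hm : n - k = (n - (k+1)) + 1 := by omega
        have hm2 : n + 1 - (k+1) = (n - (k+1)) + 1 := by omega
        set m := n - (k+1) with hmdef
        rw [hm, hm2, Finset.prod_range_succ, Finset.prod_range_succ']
        have hc : ∀ i ∈ Finset.range m,
            ((n:ℚ)+1+r-1-((i:ℚ)+1)) = (n:ℚ)+r-1-(i:ℚ) := by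
          intro i _; ring
        push_cast
        rw [Finset.prod_congr rfl hc]
        have hmcast : (m:ℚ) = (n:ℚ) - (k:ℚ) - 1 := by
          have : (m:ℕ) = n - (k+1) := hmdef
          have : ((n - (k+1) : ℕ) : ℚ) = (n:ℚ) - ((k:ℚ)+1) := by
            push_cast [Nat.cast_sub hk1]; ring
          rw [hmdef, this]; ring
        have hchoose : (Nat.choose n (k+1) : ℚ) * ((k:ℚ)+1)
            = (Nat.choose n k : ℚ) * ((n:ℚ) - (k:ℚ)) := by
          have h := Nat.choose_succ_right_eq n k
          have := congrArg (Nat.cast : ℕ → ℚ) h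
          push_cast [Nat.cast_sub hk] at this
          convert this using 2
        rw [Nat.choose_succ_succ]
        push_cast
        set P := ∏ i ∈ Finset.range m, ((n:ℚ)+r-1-(i:ℚ))
        rw [hmcast]
        linear_combination P * hchoose
end
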